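/- arXiv:1205.0331 — 3 statements merged into one kernel-verified Lean document; each statement's English description precedes it below -/
import Mathlib

section
/- Let d ≥ 1 and L ≥ 1 be integers, let u : ℝ^d → ℝ be continuously differentiable and L·ℤ^d-periodic, and let χ : ℝ^d → ℝ be continuously differentiable with 0 ≤ χ ≤ 1 on ℝ^d, χ = 1 on Γ_L, χ = 0 outside Γ_{3L}, and ‖∇χ(x)‖ ≤ c for all x ∈ ℝ^d, where c ≥ 0. Then ∫_{ℝ^d} ‖∇(χu)(x)‖² dx ≤ 2·3^d ( c² ∫_{Γ_L} u(x)² dx + ∫_{Γ_L} ‖∇u(x)‖² dx ). If moreover c ≤ 1, then ∫_{ℝ^d} ( (χu)² + ‖∇(χu)‖² ) ≤ 3^{d+1} ∫_{Γ_L} ( u² + ‖∇u‖² ). -/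
/-! Off `Γ_{3L}` the cut-off `χ ≥ 0` vanishes, so it attains its minimum there and `∇χ = 0`;
hence `χu` and `∇(χu) = χ∇u + u∇χ` vanish off `Γ_{3L}`. On `Γ_{3L}`, `0 ≤ χ ≤ 1` and `‖∇χ‖ ≤ c`
give `‖∇(χu)‖² ≤ 2(c²u² + ‖∇u‖²)` pointwise. The right-hand side is `Lℤ^d`-periodic and `Γ_{3L}` is
covered by the `3^d` translates of `Γ_L` by `L·{-1, 0, 1}^d`, which produces the factor `3^d`. -/

open MeasureTheory

/-- The supercell `Γ_L = (−L/2, L/2]^d ⊆ ℝ^d` (as a subset of Euclidean space). -/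
def superCellE (d : ℕ) (L : ℝ) : Set (EuclideanSpace ℝ (Fin d)) :=
  {x | ∀ i, -L / 2 < x i ∧ x i ≤ L / 2}

open scoped ENNReal

noncomputable def latticeVec (d : ℕ) (L : ℝ) (R : Fin d → ℤ) : EuclideanSpace ℝ (Fin d) :=
  (EuclideanSpace.equiv (Fin d) ℝ).symm fun i => L * R i

@[simp]
theorem latticeVec_apply (d : ℕ) (L : ℝ) (R : Fin d → ℤ) (i : Fin d) :
    latticeVec d L R i = L * R i :=
  rfl

def IsLatticePeriodic {α : Type*} (d : ℕ) (L : ℝ) (f : EuclideanSpace ℝ (Fin d) → α) : Prop :=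
  ∀ x (R : Fin d → ℤ), f (x + latticeVec d L R) = f x

namespace IsLatticePeriodic

variable {d : ℕ} {L : ℝ}

theorem gradient {u : EuclideanSpace ℝ (Fin d) → ℝ} (hu : IsLatticePeriodic d L u) :
    IsLatticePeriodic d L (gradient u) := by
  intro x R
  have hshift : (fun y => u (y + latticeVec d L R)) = u := funext fun y => hu y R
  simp only [_root_.gradient, ← fderiv_comp_add_right, hshift]

end IsLatticePeriodic

theorem superCellE_three_mul_subset_iUnion (d : ℕ) (L : ℝ) :
    superCellE d (3 * L) ⊆
      ⋃ k : Fin d → Fin 3, (· - latticeVec d L fun i => (k i : ℤ) - 1) ⁻¹' superCellE d L := by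
  intro x hx
  refine Set.mem_iUnion.2
    ⟨fun i => if x i ≤ -L / 2 then 0 else if x i ≤ L / 2 then 1 else 2, fun i => ?_⟩
  have hxi := hx i
  simp only [PiLp.sub_apply, latticeVec_apply]
  split_ifs <;> norm_num <;> constructor <;> linarith [hxi.1, hxi.2]

theorem lintegral_superCellE_three_mul_le {d : ℕ} {L : ℝ} {g : EuclideanSpace ℝ (Fin d) → ℝ≥0∞}
    (hg : IsLatticePeriodic d L g) :
    ∫⁻ x in superCellE d (3 * L), g x ≤ 3 ^ d * ∫⁻ x in superCellE d L, g x := by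
  have htranslate (R : Fin d → ℤ) :
      ∫⁻ x in (· - latticeVec d L R) ⁻¹' superCellE d L, g x = ∫⁻ x in superCellE d L, g x := by
    have h := (measurePreserving_sub_right volume (latticeVec d L R)).setLIntegral_comp_preimage_emb
      (MeasurableEquiv.subRight _).measurableEmbedding (fun y => g (y + latticeVec d L R))
      (superCellE d L)
    simpa only [sub_add_cancel, hg _ R] using h
  calc ∫⁻ x in superCellE d (3 * L), g x
      ≤ ∫⁻ x in ⋃ k : Fin d → Fin 3,
          (· - latticeVec d L fun i => (k i : ℤ) - 1) ⁻¹' superCellE d L, g x :=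
        lintegral_mono_set (superCellE_three_mul_subset_iUnion d L)
    _ ≤ ∑' k : Fin d → Fin 3, ∫⁻ x in
          (· - latticeVec d L fun i => (k i : ℤ) - 1) ⁻¹' superCellE d L, g x :=
        lintegral_iUnion_le _ _
    _ = 3 ^ d * ∫⁻ x in superCellE d L, g x := by
        simp [htranslate, tsum_fintype]

theorem lintegral_le_mul_lintegral_superCellE {d : ℕ} {L : ℝ}
    {F g : EuclideanSpace ℝ (Fin d) → ℝ≥0∞} {K : ℝ≥0∞} (hK : K ≠ ∞)
    (hg : IsLatticePeriodic d L g) (hF : ∀ x ∉ superCellE d (3 * L), F x = 0)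
    (hFg : ∀ x, F x ≤ K * g x) :
    ∫⁻ x, F x ≤ K * 3 ^ d * ∫⁻ x in superCellE d L, g x := by
  calc ∫⁻ x, F x = ∫⁻ x in superCellE d (3 * L), F x :=
        (setLIntegral_eq_of_support_subset (Function.support_subset_iff'.2 hF)).symm
    _ ≤ ∫⁻ x in superCellE d (3 * L), K * g x := lintegral_mono hFg
    _ = K * ∫⁻ x in superCellE d (3 * L), g x := lintegral_const_mul' K g hK
    _ ≤ K * (3 ^ d * ∫⁻ x in superCellE d L, g x) := by
        gcongr
        exact lintegral_superCellE_three_mul_le hg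
    _ = K * 3 ^ d * ∫⁻ x in superCellE d L, g x := (mul_assoc _ _ _).symm

section Gradient

variable {F : Type*} [NormedAddCommGroup F] [InnerProductSpace ℝ F] [CompleteSpace F]

theorem gradient_fun_mul {f g : F → ℝ} {x : F} (hf : DifferentiableAt ℝ f x)
    (hg : DifferentiableAt ℝ g x) :
    gradient (fun y => f y * g y) x = f x • gradient g x + g x • gradient f x := by
  simp only [gradient, fderiv_fun_mul hf hg, map_add, map_smul]

theorem IsLocalMin.gradient_eq_zero {f : F → ℝ} {x : F} (h : IsLocalMin f x) :
    gradient f x = 0 := by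
  simp only [gradient, h.fderiv_eq_zero, map_zero]

theorem gradient_fun_mul_eq_zero {χ u : F → ℝ} {x : F} (hχ : DifferentiableAt ℝ χ x)
    (hu : DifferentiableAt ℝ u x) (hmin : IsLocalMin χ x) (hx : χ x = 0) :
    gradient (fun y => χ y * u y) x = 0 := by
  rw [gradient_fun_mul hχ hu, hmin.gradient_eq_zero, hx, zero_smul, smul_zero, add_zero]

theorem sq_norm_gradient_mul_le {χ u : F → ℝ} {x : F} {c : ℝ} (hχ : DifferentiableAt ℝ χ x)
    (hu : DifferentiableAt ℝ u x) (hχ0 : 0 ≤ χ x) (hχ1 : χ x ≤ 1) (hgrad : ‖gradient χ x‖ ≤ c) :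
    ‖gradient (fun y => χ y * u y) x‖ ^ 2 ≤ 2 * (c ^ 2 * u x ^ 2 + ‖gradient u x‖ ^ 2) := by
  have hχu : ‖χ x • gradient u x‖ ≤ ‖gradient u x‖ := by
    rw [norm_smul, Real.norm_of_nonneg hχ0]
    exact mul_le_of_le_one_left (norm_nonneg _) hχ1
  have huχ : ‖u x • gradient χ x‖ ≤ |u x| * c := by
    rw [norm_smul, Real.norm_eq_abs]
    exact mul_le_mul_of_nonneg_left hgrad (abs_nonneg _)
  have htri : ‖gradient (fun y => χ y * u y) x‖ ≤ ‖gradient u x‖ + |u x| * c := by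
    rw [gradient_fun_mul hχ hu]
    exact (norm_add_le _ _).trans (add_le_add hχu huχ)
  calc ‖gradient (fun y => χ y * u y) x‖ ^ 2 ≤ (‖gradient u x‖ + |u x| * c) ^ 2 :=
        pow_le_pow_left₀ (norm_nonneg _) htri 2
    _ ≤ 2 * (c ^ 2 * u x ^ 2 + ‖gradient u x‖ ^ 2) := by
        nlinarith [sq_nonneg (‖gradient u x‖ - |u x| * c), sq_abs (u x)]

theorem sq_mul_add_sq_norm_gradient_mul_le {χ u : F → ℝ} {x : F} {c : ℝ}
    (hχ : DifferentiableAt ℝ χ x) (hu : DifferentiableAt ℝ u x) (hχ0 : 0 ≤ χ x) (hχ1 : χ x ≤ 1)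
    (hc0 : 0 ≤ c) (hc1 : c ≤ 1) (hgrad : ‖gradient χ x‖ ≤ c) :
    (χ x * u x) ^ 2 + ‖gradient (fun y => χ y * u y) x‖ ^ 2 ≤
      3 * (u x ^ 2 + ‖gradient u x‖ ^ 2) := by
  have hχu : (χ x * u x) ^ 2 ≤ u x ^ 2 := by
    rw [mul_pow]
    exact mul_le_of_le_one_left (sq_nonneg _) (pow_le_one₀ hχ0 hχ1)
  have hcu : c ^ 2 * u x ^ 2 ≤ u x ^ 2 :=
    mul_le_of_le_one_left (sq_nonneg _) (pow_le_one₀ hc0 hc1)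
  linarith [sq_norm_gradient_mul_le hχ hu hχ0 hχ1 hgrad, sq_nonneg ‖gradient u x‖]

end Gradient

theorem h1_cutoff_periodic_le_general (d L : ℕ)
    (u χ : EuclideanSpace ℝ (Fin d) → ℝ)
    (hu : ContDiff ℝ 1 u)
    (huper : ∀ (x : EuclideanSpace ℝ (Fin d)) (R : Fin d → ℤ),
      u (x + (EuclideanSpace.equiv (Fin d) ℝ).symm (fun i => (L : ℝ) * (R i : ℝ))) = u x)
    (hχ : ContDiff ℝ 1 χ) (hχ0 : ∀ x, 0 ≤ χ x) (hχ1 : ∀ x, χ x ≤ 1)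
    (hχeq0 : ∀ x ∉ superCellE d (3 * (L : ℝ)), χ x = 0)
    (c : ℝ) (hc : 0 ≤ c) (hgradχ : ∀ x, ‖gradient χ x‖ ≤ c) :
    (∫⁻ x, ENNReal.ofReal (‖gradient (fun y => χ y * u y) x‖ ^ 2) ≤
        2 * 3 ^ d *
          (ENNReal.ofReal (c ^ 2) *
              (∫⁻ x in superCellE d (L : ℝ), ENNReal.ofReal ((u x) ^ 2)) +
            ∫⁻ x in superCellE d (L : ℝ), ENNReal.ofReal (‖gradient u x‖ ^ 2))) ∧
    (c ≤ 1 →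
      ∫⁻ x, ENNReal.ofReal ((χ x * u x) ^ 2 + ‖gradient (fun y => χ y * u y) x‖ ^ 2) ≤
        3 ^ (d + 1) *
          ∫⁻ x in superCellE d (L : ℝ), ENNReal.ofReal ((u x) ^ 2 + ‖gradient u x‖ ^ 2)) := by
  have hper : IsLatticePeriodic d L u := huper
  have hud x : DifferentiableAt ℝ u x := hu.differentiable one_ne_zero x
  have hχd x : DifferentiableAt ℝ χ x := hχ.differentiable one_ne_zero x
  have hvanish x (hx : x ∉ superCellE d (3 * L)) : gradient (fun y => χ y * u y) x = 0 :=
    gradient_fun_mul_eq_zero (hχd x) (hud x)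
      (Filter.Eventually.of_forall fun y => hχeq0 x hx ▸ hχ0 y) (hχeq0 x hx)
  constructor
  · calc ∫⁻ x, ENNReal.ofReal (‖gradient (fun y => χ y * u y) x‖ ^ 2)
        ≤ 2 * 3 ^ d * ∫⁻ x in superCellE d L,
            (ENNReal.ofReal (c ^ 2) * ENNReal.ofReal (u x ^ 2) +
              ENNReal.ofReal (‖gradient u x‖ ^ 2)) := by
          refine lintegral_le_mul_lintegral_superCellE (by norm_num)
            (fun x R => by simp only [hper x R, hper.gradient x R])
            (fun x hx => by simp [hvanish x hx]) fun x => ?_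
          rw [← ENNReal.ofReal_mul (sq_nonneg c),
            ← ENNReal.ofReal_add (by positivity) (by positivity)]
          simpa only [ENNReal.ofReal_mul zero_le_two, ENNReal.ofReal_ofNat] using
            ENNReal.ofReal_le_ofReal
              (sq_norm_gradient_mul_le (hχd x) (hud x) (hχ0 x) (hχ1 x) (hgradχ x))
      _ = _ := by
          rw [lintegral_add_left' ?_, lintegral_const_mul' _ _ ENNReal.ofReal_ne_top]
          exact ((hu.continuous.pow 2).measurable.ennreal_ofReal.const_mul _).aemeasurable
  · intro hc1
    calc ∫⁻ x, ENNReal.ofReal ((χ x * u x) ^ 2 + ‖gradient (fun y => χ y * u y) x‖ ^ 2)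
        ≤ 3 * 3 ^ d * ∫⁻ x in superCellE d L, ENNReal.ofReal (u x ^ 2 + ‖gradient u x‖ ^ 2) := by
          refine lintegral_le_mul_lintegral_superCellE (by norm_num)
            (fun x R => by simp only [hper x R, hper.gradient x R])
            (fun x hx => by simp [hχeq0 x hx, hvanish x hx]) fun x => ?_
          simpa only [ENNReal.ofReal_mul zero_le_three, ENNReal.ofReal_ofNat] using
            ENNReal.ofReal_le_ofReal (sq_mul_add_sq_norm_gradient_mul_le (hχd x) (hud x)
              (hχ0 x) (hχ1 x) hc hc1 (hgradχ x))
      _ = _ := by rw [pow_succ']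

/-- `H¹` norm equivalence between `ℝ^d` and `Γ_L` for a cut-off periodized function `χu`
(inequality (6.3) of the paper). -/
theorem h1_cutoff_periodic_le (d L : ℕ) (hd : 1 ≤ d) (hL : 1 ≤ L)
    (u χ : EuclideanSpace ℝ (Fin d) → ℝ)
    (hu : ContDiff ℝ 1 u)
    (huper : ∀ (x : EuclideanSpace ℝ (Fin d)) (R : Fin d → ℤ),
      u (x + (EuclideanSpace.equiv (Fin d) ℝ).symm (fun i => (L : ℝ) * (R i : ℝ))) = u x)
    (hχ : ContDiff ℝ 1 χ) (hχ0 : ∀ x, 0 ≤ χ x) (hχ1 : ∀ x, χ x ≤ 1)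
    (hχeq1 : ∀ x ∈ superCellE d (L : ℝ), χ x = 1)
    (hχeq0 : ∀ x ∉ superCellE d (3 * (L : ℝ)), χ x = 0)
    (c : ℝ) (hc : 0 ≤ c) (hgradχ : ∀ x, ‖gradient χ x‖ ≤ c) :
    (∫⁻ x, ENNReal.ofReal (‖gradient (fun y => χ y * u y) x‖ ^ 2) ≤
        2 * 3 ^ d *
          (ENNReal.ofReal (c ^ 2) *
              (∫⁻ x in superCellE d (L : ℝ), ENNReal.ofReal ((u x) ^ 2)) +
            ∫⁻ x in superCellE d (L : ℝ), ENNReal.ofReal (‖gradient u x‖ ^ 2))) ∧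
    (c ≤ 1 →
      ∫⁻ x, ENNReal.ofReal ((χ x * u x) ^ 2 + ‖gradient (fun y => χ y * u y) x‖ ^ 2) ≤
        3 ^ (d + 1) *
          ∫⁻ x in superCellE d (L : ℝ), ENNReal.ofReal ((u x) ^ 2 + ‖gradient u x‖ ^ 2)) :=
  h1_cutoff_periodic_le_general d L u χ hu huper hχ hχ0 hχ1 hχeq0 c hc hgradχ
end

section
/- Let E be a nonzero finite-dimensional real inner product space, T : E → E a symmetric linear map (⟨Tx, y⟩ = ⟨x, Ty⟩ for all x, y), μ ∈ ℝ, and α ∈ ℝ a number such that α ≤ |ν − μ| / (1 + |ν|) for every eigenvalue ν of T. Then for every w ∈ E there exists v ∈ E with ‖v‖ = ‖w‖, ⟨Tv, v⟩ = ⟨Tw, w⟩, and ⟨Tw − μw, v⟩ ≥ α · ( ‖w‖² + |⟨Tw, w⟩| ). In particular, inf_{w ≠ 0} sup_{v ≠ 0} |⟨(T − μ)w, v⟩| / (N(w) N(v)) ≥ α, where N(x) := ( ‖x‖² + |⟨Tx, x⟩| )^{1/2}. -/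
/-!
Expand `w` in an orthonormal eigenbasis of `T`, `w = ∑ cᵢ ζᵢ`, and take `v = ∑ sᵢ cᵢ ζᵢ` with
`sᵢ = ±1` the sign of `νᵢ - μ`.
Flipping signs of coordinates preserves `‖w‖` and `⟪T w, w⟫ = ∑ νᵢ cᵢ²`, while
`⟪T w - μ w, v⟫ = ∑ |νᵢ - μ| cᵢ² ≥ α ∑ (1 + |νᵢ|) cᵢ² ≥ α (‖w‖² + |⟪T w, w⟫|)`
when `α ≥ 0`; for `α < 0` the bound is trivial.
-/

open RealInnerProductSpace

theorem mul_sum_sq_add_abs_sum_le {ι : Type*} (s : Finset ι) (c ν g : ι → ℝ) {α : ℝ}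
    (hg : ∀ i ∈ s, 0 ≤ g i) (h : ∀ i ∈ s, α * (1 + |ν i|) ≤ g i) :
    α * (∑ i ∈ s, c i ^ 2 + |∑ i ∈ s, ν i * c i ^ 2|) ≤ ∑ i ∈ s, g i * c i ^ 2 := by
  rcases le_or_gt α 0 with hα | hα
  · calc α * (∑ i ∈ s, c i ^ 2 + |∑ i ∈ s, ν i * c i ^ 2|) ≤ 0 :=
          mul_nonpos_of_nonpos_of_nonneg hα (by positivity)
      _ ≤ ∑ i ∈ s, g i * c i ^ 2 :=
          Finset.sum_nonneg fun i hi => mul_nonneg (hg i hi) (sq_nonneg _)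
  have habs : |∑ i ∈ s, ν i * c i ^ 2| ≤ ∑ i ∈ s, |ν i| * c i ^ 2 :=
    (Finset.abs_sum_le_sum_abs _ _).trans_eq (by simp [abs_mul])
  calc α * (∑ i ∈ s, c i ^ 2 + |∑ i ∈ s, ν i * c i ^ 2|)
      ≤ α * ∑ i ∈ s, (1 + |ν i|) * c i ^ 2 := by
        gcongr
        simp only [add_mul, one_mul, Finset.sum_add_distrib]
        gcongr
    _ = ∑ i ∈ s, α * (1 + |ν i|) * c i ^ 2 := by simp only [Finset.mul_sum, mul_assoc]
    _ ≤ ∑ i ∈ s, g i * c i ^ 2 := by gcongr with i hi; exact h i hi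

namespace OrthonormalBasis

variable {ι E : Type*} [Fintype ι] [NormedAddCommGroup E] [InnerProductSpace ℝ E]
  (b : OrthonormalBasis ι ℝ E)

theorem inner_map_eq_sum_of_repr_map {A : E →ₗ[ℝ] E} {d : ι → ℝ}
    (hA : ∀ x i, b.repr (A x) i = d i * b.repr x i) (x y : E) :
    ⟪A x, y⟫ = ∑ i, d i * b.repr x i * b.repr y i := by
  rw [← b.repr.inner_map_map, PiLp.inner_apply]
  simp [hA, mul_comm]

theorem norm_sq_eq_sum_repr_sq (x : E) : ‖x‖ ^ 2 = ∑ i, b.repr x i ^ 2 := by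
  rw [← b.repr.norm_map x, EuclideanSpace.norm_sq_eq]
  simp only [Real.norm_eq_abs, sq_abs]

noncomputable def coordMul (s : ι → ℝ) (x : E) : E :=
  b.repr.symm (WithLp.toLp 2 fun i => s i * b.repr x i)

@[simp]
theorem repr_coordMul (s : ι → ℝ) (x : E) (i : ι) :
    b.repr (b.coordMul s x) i = s i * b.repr x i := by
  simp [coordMul]

variable {s : ι → ℝ}

theorem norm_coordMul (hs : ∀ i, s i ^ 2 = 1) (x : E) : ‖b.coordMul s x‖ = ‖x‖ := by
  rw [← pow_left_inj₀ (norm_nonneg _) (norm_nonneg _) two_ne_zero, b.norm_sq_eq_sum_repr_sq,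
    b.norm_sq_eq_sum_repr_sq]
  simp [mul_pow, hs]

theorem inner_map_coordMul_self {A : E →ₗ[ℝ] E} {d : ι → ℝ}
    (hA : ∀ x i, b.repr (A x) i = d i * b.repr x i) (hs : ∀ i, s i ^ 2 = 1) (x : E) :
    ⟪A (b.coordMul s x), b.coordMul s x⟫ = ⟪A x, x⟫ := by
  simp only [b.inner_map_eq_sum_of_repr_map hA, repr_coordMul]
  refine Finset.sum_congr rfl fun i _ => ?_
  linear_combination d i * b.repr x i ^ 2 * hs i

end OrthonormalBasis

namespace LinearMap.IsSymmetric

variable {E : Type*} [NormedAddCommGroup E] [InnerProductSpace ℝ E] [FiniteDimensional ℝ E]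
  {T : E →ₗ[ℝ] E}

theorem exists_inner_sub_smul_ge (hT : T.IsSymmetric) {μ α : ℝ}
    (hα : ∀ ν : ℝ, Module.End.HasEigenvalue T ν → α ≤ |ν - μ| / (1 + |ν|)) (w : E) :
    ∃ v : E, ‖v‖ = ‖w‖ ∧ ⟪T v, v⟫ = ⟪T w, w⟫ ∧
      α * (‖w‖ ^ 2 + |⟪T w, w⟫|) ≤ ⟪T w - μ • w, v⟫ := by
  set b := hT.eigenvectorBasis rfl
  set ν := hT.eigenvalues rfl
  have hTb : ∀ x i, b.repr (T x) i = ν i * b.repr x i := hT.eigenvectorBasis_apply_self_apply rfl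
  have hshift : ∀ x i, b.repr ((T - μ • 1) x) i = (ν i - μ) * b.repr x i := by
    simp [hTb, sub_mul]
  set s : Fin (Module.finrank ℝ E) → ℝ := fun i => if μ ≤ ν i then 1 else -1
  have hs : ∀ i, s i ^ 2 = 1 := fun i => by by_cases h : μ ≤ ν i <;> simp [s, h]
  have hsν : ∀ i, (ν i - μ) * s i = |ν i - μ| := fun i => by
    by_cases h : μ ≤ ν i
    · simp [s, h, abs_of_nonneg (sub_nonneg.mpr h)]
    · simp [s, h, abs_of_neg (sub_neg.mpr (not_le.mp h))]
  refine ⟨b.coordMul s w, b.norm_coordMul hs w, b.inner_map_coordMul_self hTb hs w, ?_⟩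
  have hgap : ∀ i ∈ Finset.univ, α * (1 + |ν i|) ≤ |ν i - μ| := fun i _ =>
    (le_div_iff₀ (by positivity)).mp (hα _ (hT.hasEigenvalue_eigenvalues rfl i))
  calc α * (‖w‖ ^ 2 + |⟪T w, w⟫|)
      = α * (∑ i, b.repr w i ^ 2 + |∑ i, ν i * b.repr w i ^ 2|) := by
        simp only [b.norm_sq_eq_sum_repr_sq, b.inner_map_eq_sum_of_repr_map hTb, mul_assoc, sq]
    _ ≤ ∑ i, |ν i - μ| * b.repr w i ^ 2 :=
        mul_sum_sq_add_abs_sum_le _ _ _ _ (fun _ _ => abs_nonneg _) hgap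
    _ = ⟪(T - μ • 1) w, b.coordMul s w⟫ := by
        rw [b.inner_map_eq_sum_of_repr_map hshift]
        refine Finset.sum_congr rfl fun i _ => ?_
        rw [b.repr_coordMul, ← hsν]
        ring

end LinearMap.IsSymmetric

theorem infsup_of_symmetric_eigenvalue_gap_general {E : Type*} [NormedAddCommGroup E]
    [InnerProductSpace ℝ E] [FiniteDimensional ℝ E]
    (T : E →ₗ[ℝ] E) (hT : ∀ x y : E, ⟪T x, y⟫ = ⟪x, T y⟫)
    (μ α : ℝ)
    (hα : ∀ ν : ℝ, Module.End.HasEigenvalue T ν → α ≤ |ν - μ| / (1 + |ν|)) :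
    (∀ w : E, ∃ v : E, ‖v‖ = ‖w‖ ∧ ⟪T v, v⟫ = ⟪T w, w⟫ ∧
      α * (‖w‖ ^ 2 + |⟪T w, w⟫|) ≤ ⟪T w - μ • w, v⟫) ∧
    ∀ w : E, w ≠ 0 → ∃ v : E, v ≠ 0 ∧
      α * (Real.sqrt (‖w‖ ^ 2 + |⟪T w, w⟫|) * Real.sqrt (‖v‖ ^ 2 + |⟪T v, v⟫|)) ≤
        |⟪T w - μ • w, v⟫| := by
  have hT' : T.IsSymmetric := hT
  refine ⟨hT'.exists_inner_sub_smul_ge hα, fun w hw => ?_⟩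
  obtain ⟨v, hv, hTv, hle⟩ := hT'.exists_inner_sub_smul_ge hα w
  refine ⟨v, norm_ne_zero_iff.mp (hv ▸ norm_ne_zero_iff.mpr hw), ?_⟩
  rw [hv, hTv, Real.mul_self_sqrt (by positivity)]
  exact hle.trans (le_abs_self _)

/-- Discrete inf–sup lower bound for a symmetric endomorphism of a finite-dimensional real
inner product space whose eigenvalues `ν` all satisfy `α ≤ |ν − μ|/(1 + |ν|)`
(inequality (6.4) of the paper). -/
theorem infsup_of_symmetric_eigenvalue_gap {E : Type*} [NormedAddCommGroup E]
    [InnerProductSpace ℝ E] [FiniteDimensional ℝ E] [Nontrivial E]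
    (T : E →ₗ[ℝ] E) (hT : ∀ x y : E, ⟪T x, y⟫ = ⟪x, T y⟫)
    (μ α : ℝ)
    (hα : ∀ ν : ℝ, Module.End.HasEigenvalue T ν → α ≤ |ν - μ| / (1 + |ν|)) :
    (∀ w : E, ∃ v : E, ‖v‖ = ‖w‖ ∧ ⟪T v, v⟫ = ⟪T w, w⟫ ∧
      α * (‖w‖ ^ 2 + |⟪T w, w⟫|) ≤ ⟪T w - μ • w, v⟫) ∧
    ∀ w : E, w ≠ 0 → ∃ v : E, v ≠ 0 ∧
      α * (Real.sqrt (‖w‖ ^ 2 + |⟪T w, w⟫|) * Real.sqrt (‖v‖ ^ 2 + |⟪T v, v⟫|)) ≤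
        |⟪T w - μ • w, v⟫| :=
  infsup_of_symmetric_eigenvalue_gap_general T hT μ α hα
end

section
/- Let H be a real inner product space, q ≥ 1 an integer, (ζ_1, …, ζ_q) an orthonormal family in H, and (e_1, …, e_q) vectors in H such that ‖e_i − ζ_i‖ ≤ 1/(4q) for every 1 ≤ i ≤ q. Then the family (e_1, …, e_q) is linearly independent, and for all real numbers α_1, …, α_q one has max_{1 ≤ i ≤ q} |α_i| ≤ 2 ‖ Σ_{i=1}^q α_i e_i ‖. -/
/-!
Pairing with `ζ i` shows that an orthonormal family recovers every coefficient:
`|αᵢ| ≤ ‖Σ αⱼ ζⱼ‖`. Replacing `ζ` by `e` moves the combination by at most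
`maxⱼ |αⱼ| · Σⱼ ‖eⱼ - ζⱼ‖ ≤ maxⱼ |αⱼ| / 4`, so the largest coefficient satisfies
`(3/4) maxⱼ |αⱼ| ≤ ‖Σ αⱼ eⱼ‖`. Such a lower bound forces linear independence.
-/

open Finset

section

variable {𝕜 E ι : Type*} [Fintype ι]

theorem Orthonormal.norm_coeff_le_norm_sum [RCLike 𝕜] [SeminormedAddCommGroup E]
    [InnerProductSpace 𝕜 E] {ζ : ι → E} (hζ : Orthonormal 𝕜 ζ) (α : ι → 𝕜) (i : ι) :
    ‖α i‖ ≤ ‖∑ j, α j • ζ j‖ := by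
  calc ‖α i‖ = ‖inner 𝕜 (ζ i) (∑ j, α j • ζ j)‖ := by rw [hζ.inner_right_fintype]
    _ ≤ ‖ζ i‖ * ‖∑ j, α j • ζ j‖ := norm_inner_le_norm _ _
    _ = ‖∑ j, α j • ζ j‖ := by rw [hζ.1 i, one_mul]

theorem norm_sum_smul_sub_sum_smul_le [NormedField 𝕜] [SeminormedAddCommGroup E]
    [NormedSpace 𝕜 E] (ζ e : ι → E) (α : ι → 𝕜) {M : ℝ} (hM : ∀ j, ‖α j‖ ≤ M) :
    ‖∑ j, α j • ζ j - ∑ j, α j • e j‖ ≤ M * ∑ j, ‖ζ j - e j‖ := by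
  rw [← sum_sub_distrib, mul_sum]
  refine (norm_sum_le _ _).trans (sum_le_sum fun j _ => ?_)
  rw [← smul_sub, norm_smul]
  exact mul_le_mul_of_nonneg_right (hM j) (norm_nonneg _)

theorem Orthonormal.norm_coeff_mul_le_norm_sum_of_sum_norm_sub_le [RCLike 𝕜]
    [SeminormedAddCommGroup E] [InnerProductSpace 𝕜 E] {ζ : ι → E} (hζ : Orthonormal 𝕜 ζ)
    {e : ι → E} {δ : ℝ} (he : ∑ j, ‖ζ j - e j‖ ≤ δ) (α : ι → 𝕜) (i : ι) :
    (1 - δ) * ‖α i‖ ≤ ‖∑ j, α j • e j‖ := by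
  have : Nonempty ι := ⟨i⟩
  obtain ⟨k, hk⟩ := Finite.exists_max fun j => ‖α j‖
  have hmax : (1 - δ) * ‖α k‖ ≤ ‖∑ j, α j • e j‖ := by
    have hperturb := (norm_sum_smul_sub_sum_smul_le ζ e α hk).trans
      (mul_le_mul_of_nonneg_left he (norm_nonneg (α k)))
    have hsub := norm_sub_norm_le (∑ j, α j • ζ j) (∑ j, α j • e j)
    linarith [hζ.norm_coeff_le_norm_sum α k]
  rcases le_or_gt δ 1 with hδ | hδ
  · exact (mul_le_mul_of_nonneg_left (hk i) (by linarith)).trans hmax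
  · exact (mul_nonpos_of_nonpos_of_nonneg (by linarith) (norm_nonneg _)).trans (norm_nonneg _)

theorem linearIndependent_of_norm_coeff_le [NormedField 𝕜] [SeminormedAddCommGroup E]
    [Module 𝕜 E] {e : ι → E} {C : ℝ} (h : ∀ (α : ι → 𝕜) i, ‖α i‖ ≤ C * ‖∑ j, α j • e j‖) :
    LinearIndependent 𝕜 e := by
  refine Fintype.linearIndependent_iff.2 fun α hα i => norm_le_zero_iff.1 ?_
  simpa [hα] using h α i

end

theorem linearIndependent_and_coeff_bound_of_near_orthonormal_general
    {H : Type*} [NormedAddCommGroup H] [InnerProductSpace ℝ H]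
    (q : ℕ) (ζ e : Fin q → H) (hζ : Orthonormal ℝ ζ)
    (he : ∀ i, ‖e i - ζ i‖ ≤ 1 / (4 * q)) :
    LinearIndependent ℝ e ∧
    ∀ (α : Fin q → ℝ) (i : Fin q), |α i| ≤ 2 * ‖∑ j, α j • e j‖ := by
  have hsum : ∑ j, ‖ζ j - e j‖ ≤ 1 / 4 := by
    calc ∑ j, ‖ζ j - e j‖ ≤ ∑ _j : Fin q, 1 / (4 * (q : ℝ)) :=
          sum_le_sum fun j _ => norm_sub_rev (ζ j) (e j) ▸ he j
      _ ≤ 1 / 4 := by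
          rw [sum_const, card_univ, Fintype.card_fin, nsmul_eq_mul, mul_one_div,
            div_mul_eq_div_div_swap]
          exact div_le_div_of_nonneg_right (div_self_le_one _) (by norm_num)
  have bound : ∀ (α : Fin q → ℝ) i, |α i| ≤ 2 * ‖∑ j, α j • e j‖ := fun α i => by
    have := hζ.norm_coeff_mul_le_norm_sum_of_sum_norm_sub_le hsum α i
    rw [Real.norm_eq_abs] at this
    linarith [abs_nonneg (α i)]
  exact ⟨linearIndependent_of_norm_coeff_le bound, bound⟩

/-- If each `e i` is within `1/(4q)` of an orthonormal family `(ζ i)` in a real inner product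
space, then `(e i)` is linearly independent and the coefficients of any linear combination
`Σ αᵢ eᵢ` satisfy `maxᵢ |αᵢ| ≤ 2 ‖Σ αᵢ eᵢ‖` (Section 4.3 of the paper). -/
theorem linearIndependent_and_coeff_bound_of_near_orthonormal
    {H : Type*} [NormedAddCommGroup H] [InnerProductSpace ℝ H]
    (q : ℕ) (hq : 1 ≤ q) (ζ e : Fin q → H) (hζ : Orthonormal ℝ ζ)
    (he : ∀ i, ‖e i - ζ i‖ ≤ 1 / (4 * q)) :
    LinearIndependent ℝ e ∧
    ∀ (α : Fin q → ℝ) (i : Fin q), |α i| ≤ 2 * ‖∑ j, α j • e j‖ :=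
  linearIndependent_and_coeff_bound_of_near_orthonormal_general q ζ e hζ he
end
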